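/- Let A = (Q, Σ) be a synchronizing DFA with |Σ| ≥ 2, let ℓ be the minimum length of reset words for A, let b ∈ Σ and q0 ∈ Q be fixed, and let D be the duplication of A with respect to b and q0. Then Alice cannot win the synchronization game on D making fewer than ℓ moves: against the Bob strategy that always chooses the letter b, in every play that reaches a singleton position Alice has chosen at least ℓ letters. -/
import Mathlib


/-- Apply a word (list of letters) to a state of a DFA with transition function `δ`. -/
def applyWord {Q A : Type*} (δ : Q → A → Q) (q : Q) : List A → Q
  | [] => q
  | a :: w => applyWord δ (δ q a) w

/-- The history (list) of letters played after `n` moves of the synchronization game,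
when Alice uses strategy `σA` and Bob uses strategy `σB`; Alice moves first, i.e.
the letters at even indices are chosen by Alice and those at odd indices by Bob. -/
def playHist {A : Type*} (σA σB : List A → A) : ℕ → List A
  | 0 => []
  | n + 1 =>
      let h := playHist σA σB n
      h ++ [if n % 2 = 0 then σA h else σB h]

/-- `w` synchronizes the position `P` (a set of states holding coins) to a single state. -/
def IsResetFrom {Q A : Type*} [DecidableEq Q] (δ : Q → A → Q) (P : Finset Q)
    (w : List A) : Prop :=
  (P.image fun q => applyWord δ q w).card = 1

/-- Alice has a winning strategy in the synchronization game starting from position `P`. -/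
def AliceWins {Q A : Type*} [DecidableEq Q] (δ : Q → A → Q) (P : Finset Q) : Prop :=
  ∃ σA : List A → A, ∀ σB : List A → A, ∃ k : ℕ,
    IsResetFrom δ P (playHist σA σB k)

/-- Alice has a strategy in the synchronization game starting from position `P` that
guarantees reaching a singleton position in a play in which Alice has chosen at most
`m` letters (after `k` letters in total, Alice has chosen `(k + 1) / 2` of them). -/
def AliceWinsWithin {Q A : Type*} [DecidableEq Q] (δ : Q → A → Q) (P : Finset Q)
    (m : ℕ) : Prop :=
  ∃ σA : List A → A, ∀ σB : List A → A, ∃ k : ℕ,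
    IsResetFrom δ P (playHist σA σB k) ∧ (k + 1) / 2 ≤ m

/-- Bob has a winning strategy in the synchronization game starting from position `P`:
against every strategy of Alice the position never becomes a singleton. -/
def BobWins {Q A : Type*} [DecidableEq Q] (δ : Q → A → Q) (P : Finset Q) : Prop :=
  ∃ σB : List A → A, ∀ σA : List A → A, ∀ k : ℕ,
    ¬ IsResetFrom δ P (playHist σA σB k)

/-- The duplication of the DFA `δ` with respect to the letter `b` and the state `q0`:
states are `Q × Bool` (with `false` for `0` and `true` for `1`), and
`(q, 0)·a = (q·a, 1)`, `(q, 1)·b = (q, 0)`, `(q, 1)·a = (q0, 1)` for `a ≠ b`. -/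
def dup {Q A : Type*} [DecidableEq A] (δ : Q → A → Q) (b : A) (q0 : Q) :
    Q × Bool → A → Q × Bool
  | (q, false), a => (δ q a, true)
  | (q, true), a => if a = b then (q, false) else (q0, true)

lemma applyWord_append {Q A : Type*} (δ : Q → A → Q) (q : Q) (v w : List A) :
    applyWord δ q (v ++ w) = applyWord δ (applyWord δ q v) w := by
  induction v generalizing q with
  | nil => rfl
  | cons a v ih => simp [applyWord, ih]

def aliceWord {A : Type*} (σA : List A → A) (b : A) : ℕ → List A
  | 0 => []
  | m + 1 => aliceWord σA b m ++ [σA (playHist σA (fun _ => b) (2*m))]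

lemma aliceWord_length {A : Type*} (σA : List A → A) (b : A) (m : ℕ) :
    (aliceWord σA b m).length = m := by
  induction m with
  | zero => rfl
  | succ m ih => simp [aliceWord, ih]

lemma key_even {Q A : Type*} [DecidableEq A] (δ : Q → A → Q) (b : A) (q0 : Q)
    (σA : List A → A) (m : ℕ) (q : Q) :
    applyWord (dup δ b q0) (q, false) (playHist σA (fun _ => b) (2*m)) =
      (applyWord δ q (aliceWord σA b m), false) := by
  induction m with
  | zero => rfl
  | succ m ih =>
    have h1 : 2 * (m + 1) = (2*m + 1) + 1 := by ring
    have e0 : (2*m) % 2 = 0 := by omega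
    have e1 : (2*m + 1) % 2 = 1 := by omega
    rw [h1]
    simp only [playHist, e0, e1, reduceIte, Nat.one_ne_zero, if_false]
    rw [List.append_assoc, applyWord_append, ih, aliceWord, applyWord_append]
    simp [applyWord, dup, applyWord_append]

lemma key_odd {Q A : Type*} [DecidableEq A] (δ : Q → A → Q) (b : A) (q0 : Q)
    (σA : List A → A) (m : ℕ) (q : Q) :
    applyWord (dup δ b q0) (q, false) (playHist σA (fun _ => b) (2*m + 1)) =
      (applyWord δ q (aliceWord σA b (m+1)), true) := by
  have e0 : (2*m) % 2 = 0 := by omega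
  simp only [playHist, e0, if_pos rfl]
  rw [applyWord_append, key_even, aliceWord, applyWord_append]
  simp [applyWord, dup, applyWord_append]

/-- Let `δ` be a synchronizing DFA with at least two input letters whose shortest reset
words have length `ℓ`, and let `D` be its duplication w.r.t. `b` and `q0`. Against the Bob
strategy that always chooses the letter `b`, in every play of the synchronization game on
`D` that reaches a singleton position Alice has chosen at least `ℓ` letters (after `k`
letters in total, Alice has chosen `(k + 1) / 2` of them). -/
theorem alice_needs_ell_moves_on_duplication {Q A : Type*} [Fintype Q] [DecidableEq Q]
    [Fintype A] [DecidableEq A] (δ : Q → A → Q) (b : A) (q0 : Q)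
    (hA : 2 ≤ Fintype.card A) (ℓ : ℕ) (w₀ : List A)
    (hw₀ : IsResetFrom δ Finset.univ w₀) (hlen : w₀.length = ℓ)
    (hmin : ∀ w : List A, IsResetFrom δ Finset.univ w → ℓ ≤ w.length) :
    ∀ σA : List A → A, ∀ k : ℕ,
      IsResetFrom (dup δ b q0) Finset.univ (playHist σA (fun _ => b) k) →
      ℓ ≤ (k + 1) / 2 := by
  intro σA k hk
  obtain ⟨x, hx⟩ := Finset.card_eq_one.mp hk
  have hconst : ∀ p : Q × Bool,
      applyWord (dup δ b q0) p (playHist σA (fun _ => b) k) = x := by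
    intro p
    have : applyWord (dup δ b q0) p (playHist σA (fun _ => b) k) ∈
        Finset.univ.image (fun q => applyWord (dup δ b q0) q (playHist σA (fun _ => b) k)) :=
      Finset.mem_image_of_mem _ (Finset.mem_univ p)
    rwa [hx, Finset.mem_singleton] at this
  have hres : ∀ u : List A, (∀ q : Q, applyWord δ q u = x.1) →
      IsResetFrom δ Finset.univ u := by
    intro u hu
    unfold IsResetFrom
    rw [Finset.card_eq_one]
    refine ⟨x.1, ?_⟩
    ext y
    simp only [Finset.mem_image, Finset.mem_univ, true_and, Finset.mem_singleton]
    constructor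
    · rintro ⟨q, rfl⟩; exact hu q
    · rintro rfl; exact ⟨x.1, hu x.1⟩
  obtain ⟨m, rfl | rfl⟩ := Nat.even_or_odd' k
  · have hu : ∀ q : Q, applyWord δ q (aliceWord σA b m) = x.1 := by
      intro q
      have := hconst (q, false)
      rw [key_even] at this
      exact congrArg Prod.fst this
    have := hmin _ (hres _ hu)
    rw [aliceWord_length] at this
    omega
  · have hu : ∀ q : Q, applyWord δ q (aliceWord σA b (m+1)) = x.1 := by
      intro q
      have := hconst (q, false)
      rw [key_odd] at this
      exact congrArg Prod.fst this
    have := hmin _ (hres _ hu)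
    rw [aliceWord_length] at this
    omega
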